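/- (Weak Chen–Chow) If w, v ∈ ℝ⟨1,…,d⟩ satisfy ⟨S(X), w⟩ = ⟨S(X), v⟩ for all piecewise linear paths X in ℝᵈ, then w = v. Equivalently, the signatures of piecewise linear paths span the full linear dual of the space of words of length ≤ k, for every k. -/

import Mathlib

open MeasureTheory

noncomputable section

/-- Iterated-integral signature of a path `X` (restricted to `[0,1]`) at a word:
`∫_{0 ≤ t₁ ≤ ⋯ ≤ t_k ≤ 1} X'_{i₁}(t₁) ⋯ X'_{i_k}(t_k) dt`. -/
def sig {d : ℕ} (X : ℝ → Fin d → ℝ) (w : List (Fin d)) : ℝ :=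
  ∫ t in {t : Fin w.length → ℝ | (∀ i, t i ∈ Set.Icc (0:ℝ) 1) ∧ Monotone t},
    ∏ i : Fin w.length, deriv (fun s => X s (w.get i)) (t i)

/-- The piecewise linear path with control points `x 0 → x 1 → ⋯ → x n`,
parametrized uniformly on `[0,1]`. -/
def pwl {d n : ℕ} (x : Fin (n + 1) → Fin d → ℝ) (t : ℝ) : Fin d → ℝ := fun j =>
  if t ≤ 0 then x 0 j
  else if 1 ≤ t then x (Fin.last n) j
  else
    let i : ℕ := ⌊t * (n : ℝ)⌋.toNat
    x ⟨min i n, Nat.lt_succ_of_le (min_le_right _ _)⟩ j +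
      (t * (n : ℝ) - (i : ℝ)) *
        (x ⟨min (i + 1) n, Nat.lt_succ_of_le (min_le_right _ _)⟩ j -
          x ⟨min i n, Nat.lt_succ_of_le (min_le_right _ _)⟩ j)

/-- The free associative algebra `ℝ⟨1,…,d⟩` with words as basis. -/
abbrev FreeTensor (d : ℕ) := MonoidAlgebra ℝ (FreeMonoid (Fin d))

/-- Pairing `⟨S(X), p⟩` of the signature of a path with an element of `ℝ⟨1,…,d⟩`. -/
noncomputable def sigPair {d : ℕ} (X : ℝ → Fin d → ℝ) (p : FreeTensor d) : ℝ :=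
  p.coeff.sum fun w c => c * sig X (FreeMonoid.toList w)

/-- Shuffle product of two words, as an element of `ℝ⟨1,…,d⟩`. -/
noncomputable def shW {d : ℕ} : List (Fin d) → List (Fin d) → FreeTensor d
  | [], v => MonoidAlgebra.ofCoeff (Finsupp.single (FreeMonoid.ofList v) 1)
  | a :: u, [] => MonoidAlgebra.ofCoeff (Finsupp.single (FreeMonoid.ofList (a :: u)) 1)
  | a :: u, b :: v =>
      MonoidAlgebra.ofCoeff (Finsupp.mapDomain (fun m => FreeMonoid.of a * m) (shW u (b :: v)).coeff) +
        MonoidAlgebra.ofCoeff (Finsupp.mapDomain (fun m => FreeMonoid.of b * m) (shW (a :: u) v).coeff)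
  termination_by u v => u.length + v.length

/-- The shuffle product `⧢` on `ℝ⟨1,…,d⟩`, extended bilinearly from words. -/
noncomputable def shuffle {d : ℕ} (p q : FreeTensor d) : FreeTensor d :=
  p.coeff.sum fun u a => q.coeff.sum fun v b => (a * b) • shW (FreeMonoid.toList u) (FreeMonoid.toList v)

/-- The antipode, sending a word of length `k` to `(−1)^k` times its reversal. -/
noncomputable def antipode {d : ℕ} (p : FreeTensor d) : FreeTensor d :=
  p.coeff.sum fun w c =>
    MonoidAlgebra.ofCoeff (Finsupp.single (FreeMonoid.ofList (FreeMonoid.toList w).reverse)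
      ((-1 : ℝ) ^ (FreeMonoid.toList w).length * c))

/-- The signed-volume element `vol_d = Σ_{σ ∈ S_d} sgn(σ) σ(1)⋯σ(d)`. -/
noncomputable def volElt (d : ℕ) : FreeTensor d :=
  ∑ σ : Equiv.Perm (Fin d),
    ((Equiv.Perm.sign σ : ℤ) : ℝ) •
      MonoidAlgebra.ofCoeff (Finsupp.single (FreeMonoid.ofList (List.ofFn fun i => σ i)) (1 : ℝ))

/-!
Let `p = w - v` and let `u = u₁⋯u_k` be a word of maximal length in the support of `p`. For
`A ⊆ {1,…,k}` let `X_A` be the piecewise linear path with `k` segments whose `m`-th segment is the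
unit vector `e_{u_m}` if `m ∈ A` and is constant otherwise. Cutting the simplex
`0 ≤ t₁ ≤ ⋯ ≤ t_ℓ ≤ 1` along the grid of mesh `1/k`, `⟨S(X_A), i₁⋯i_ℓ⟩` becomes a sum over the maps
`φ : {1,…,ℓ} → {1,…,k}` recording the segment of each `tᵢ`, and the term of `φ` vanishes unless
the image of `φ` lies in `A`. By inclusion–exclusion, `∑_A (-1)^{k-|A|} ⟨S(X_A), ·⟩` keeps only
the surjective `φ`; for `ℓ ≤ k` the only surjective `φ` whose cell meets the simplex is the
identity, and it contributes `1` exactly on the word `u`. Hence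
`∑_A (-1)^{k-|A|} ⟨S(X_A), p⟩ = p_u ≠ 0`, so some piecewise linear path separates `w` from `v`.
-/

open Set

lemma pwl_apply_of_mem_Ioo {d n : ℕ} (x : Fin (n + 1) → Fin d → ℝ) (j : Fin d) (m : Fin n)
    {t : ℝ} (ht : t ∈ Ioo ((m : ℕ) / n : ℝ) (((m : ℕ) + 1) / n)) :
    pwl x t j = x m.castSucc j + (t * n - m) * (x m.succ j - x m.castSucc j) := by
  have hn : (0 : ℝ) < n := by exact_mod_cast m.pos
  have hm : ((m : ℕ) : ℝ) + 1 ≤ n := by exact_mod_cast m.isLt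
  obtain ⟨h₁, h₂⟩ := ht
  rw [div_lt_iff₀ hn] at h₁
  rw [lt_div_iff₀ hn] at h₂
  have ht₀ : 0 < t := pos_of_mul_pos_left ((Nat.cast_nonneg _).trans_lt h₁) hn.le
  have ht₁ : t < 1 := by nlinarith
  have hfloor : ⌊t * n⌋ = (m : ℕ) :=
    Int.floor_eq_iff.mpr ⟨by push_cast; linarith, by push_cast; linarith⟩
  simp only [pwl, if_neg (not_le.mpr ht₀), if_neg (not_le.mpr ht₁), hfloor, Int.toNat_natCast,
    min_eq_left m.isLt.le, min_eq_left (by omega : (m : ℕ) + 1 ≤ n)]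
  rfl

lemma hasDerivAt_pwl {d n : ℕ} (x : Fin (n + 1) → Fin d → ℝ) (j : Fin d) (m : Fin n)
    {t : ℝ} (ht : t ∈ Ioo ((m : ℕ) / n : ℝ) (((m : ℕ) + 1) / n)) :
    HasDerivAt (fun s => pwl x s j) (n * (x m.succ j - x m.castSucc j)) t := by
  have hlin : HasDerivAt (fun s => x m.castSucc j + (s * n - m) * (x m.succ j - x m.castSucc j))
      (1 * n * (x m.succ j - x m.castSucc j)) t :=
    ((((hasDerivAt_id t).mul_const _).sub_const _).mul_const _).const_add _
  rw [one_mul] at hlin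
  exact hlin.congr_of_eventuallyEq <| Filter.eventually_of_mem (Ioo_mem_nhds ht.1 ht.2)
    fun s hs => pwl_apply_of_mem_Ioo x j m hs

def orderedCube (n : ℕ) : Set (Fin n → ℝ) := {t | (∀ i, t i ∈ Icc (0 : ℝ) 1) ∧ Monotone t}

def gridCell {n : ℕ} (k : ℕ) (φ : Fin n → Fin k) : Set (Fin n → ℝ) :=
  univ.pi fun i => Ioo ((φ i : ℕ) / k : ℝ) (((φ i : ℕ) + 1) / k)

lemma measurableSet_orderedCube (n : ℕ) : MeasurableSet (orderedCube n) := by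
  have : orderedCube n = univ.pi (fun _ => Icc 0 1) ∩ ⋂ (i) (j) (_ : i ≤ j), {t | t i ≤ t j} := by
    ext t
    simp only [orderedCube, mem_ofPred_eq, mem_inter_iff, mem_pi, mem_univ, true_implies,
      mem_iInter, Monotone]
  rw [this]
  exact (MeasurableSet.univ_pi fun _ => measurableSet_Icc).inter <| .iInter fun i => .iInter
    fun j => .iInter fun _ => measurableSet_le (measurable_pi_apply i) (measurable_pi_apply j)

lemma measurableSet_gridCell {n k : ℕ} (φ : Fin n → Fin k) : MeasurableSet (gridCell k φ) :=
  .univ_pi fun _ => measurableSet_Ioo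

lemma apply_lt_apply_of_mem_gridCell {n k : ℕ} {φ ψ : Fin n → Fin k} {t s : Fin n → ℝ}
    (ht : t ∈ gridCell k φ) (hs : s ∈ gridCell k ψ) {i j : Fin n} (hij : φ i < ψ j) :
    t i < s j := by
  have hle : ((φ i : ℕ) + 1 : ℝ) / k ≤ (ψ j : ℕ) / k := by
    gcongr
    exact_mod_cast hij
  exact (ht i trivial).2.trans_le (hle.trans (hs j trivial).1.le)

lemma pairwise_disjoint_gridCell (n k : ℕ) :
    Pairwise (Function.onFun Disjoint (gridCell (n := n) k)) := by
  intro φ ψ hne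
  obtain ⟨i, hi⟩ := Function.ne_iff.mp hne
  refine Set.disjoint_left.mpr fun t htφ htψ => ?_
  rcases hi.lt_or_gt with h | h
  · exact (apply_lt_apply_of_mem_gridCell htφ htψ h).false
  · exact (apply_lt_apply_of_mem_gridCell htψ htφ h).false

lemma volume_gridCell {n k : ℕ} (φ : Fin n → Fin k) :
    volume (gridCell k φ) = ENNReal.ofReal (1 / k) ^ n := by
  simp [gridCell, volume_pi_pi, Real.volume_Ioo, ← sub_div]

lemma monotone_of_nonempty_orderedCube_inter_gridCell {n k : ℕ} {φ : Fin n → Fin k}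
    (h : (orderedCube n ∩ gridCell k φ).Nonempty) : Monotone φ := by
  obtain ⟨t, ht, htφ⟩ := h
  intro i j hij
  by_contra hlt
  exact (apply_lt_apply_of_mem_gridCell htφ htφ (not_le.mp hlt)).not_ge (ht.2 hij)

lemma gridCell_subset_orderedCube {n k : ℕ} {φ : Fin n → Fin k} (hφ : StrictMono φ) :
    gridCell k φ ⊆ orderedCube n := by
  intro t ht
  refine ⟨fun i => ⟨?_, ?_⟩, fun i j hij => ?_⟩
  · exact (div_nonneg (Nat.cast_nonneg _) (Nat.cast_nonneg _)).trans (ht i trivial).1.le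
  · have hk : (0 : ℝ) < k := by exact_mod_cast (φ i).pos
    have hφk : ((φ i : ℕ) : ℝ) + 1 ≤ k := by exact_mod_cast (φ i).isLt
    exact (ht i trivial).2.le.trans ((div_le_one hk).mpr hφk)
  · rcases hij.eq_or_lt with rfl | hlt
    · exact le_rfl
    · exact (apply_lt_apply_of_mem_gridCell ht ht (hφ hlt)).le

lemma volume_real_orderedCube_inter_gridCell_cast {n k : ℕ} (h : n = k) :
    volume.real (orderedCube n ∩ gridCell k (Fin.cast h)) = (1 / k) ^ n := by
  rw [inter_eq_self_of_subset_right (gridCell_subset_orderedCube (Fin.cast_strictMono h)),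
    measureReal_def, volume_gridCell, ENNReal.toReal_pow, ENNReal.toReal_ofReal (by positivity)]

lemma exists_mem_Ioo_div_of_ne {k : ℕ} (hk : 0 < k) {x : ℝ} (hx : x ∈ Icc 0 1)
    (hne : ∀ m ≤ k, x ≠ m / k) : ∃ m : Fin k, x ∈ Ioo ((m : ℕ) / k : ℝ) (((m : ℕ) + 1) / k) := by
  have hk' : (0 : ℝ) < k := by exact_mod_cast hk
  have hxk : x * k ≤ k := by nlinarith [hx.2]
  set m := ⌊x * k⌋₊
  have hm_le : (m : ℝ) ≤ x * k := Nat.floor_le (by nlinarith [hx.1])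
  have hm_ne : (m : ℝ) ≠ x * k := fun h =>
    hne m (by exact_mod_cast hm_le.trans hxk) (by rw [h, mul_div_cancel_right₀ _ hk'.ne'])
  have hmk : m < k := by
    have : (m : ℝ) < k := (hm_le.lt_of_ne hm_ne).trans_le hxk
    exact_mod_cast this
  refine ⟨⟨m, hmk⟩, ?_, ?_⟩
  · rw [div_lt_iff₀ hk']
    exact hm_le.lt_of_ne hm_ne
  · rw [lt_div_iff₀ hk']
    exact Nat.lt_floor_add_one _

lemma orderedCube_ae_eq_iUnion_inter_gridCell {n k : ℕ} (hk : 0 < k) :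
    orderedCube n =ᵐ[volume] ⋃ φ : Fin n → Fin k, orderedCube n ∩ gridCell k φ := by
  have hnull : volume (⋃ (i : Fin n) (m : Fin (k + 1)), {t : Fin n → ℝ | t i = (m : ℕ) / k}) = 0 :=
    measure_iUnion_null fun i => measure_iUnion_null fun m => by
      rw [volume_pi]
      exact Measure.pi_hyperplane _ i _
  refine ae_eq_set.mpr ⟨measure_mono_null ?_ hnull, by
    rw [sdiff_eq_empty.mpr (iUnion_subset fun _ => inter_subset_left), measure_empty]⟩
  rintro t ⟨ht, htU⟩
  by_contra htN
  simp only [mem_iUnion, mem_ofPred_eq, not_exists] at htN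
  have hcell : ∀ i, ∃ m : Fin k, t i ∈ Ioo ((m : ℕ) / k : ℝ) (((m : ℕ) + 1) / k) := fun i =>
    exists_mem_Ioo_div_of_ne hk (ht.1 i) fun m hm => htN i ⟨m, Nat.lt_succ_of_le hm⟩
  choose φ hφ using hcell
  exact htU (mem_iUnion.mpr ⟨φ, ht, fun i _ => hφ i⟩)

lemma setIntegral_orderedCube_eq_sum {n k : ℕ} (hk : 0 < k) {f : (Fin n → ℝ) → ℝ}
    (κ : (Fin n → Fin k) → ℝ) (hf : ∀ φ, EqOn f (fun _ => κ φ) (orderedCube n ∩ gridCell k φ)) :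
    ∫ t in orderedCube n, f t = ∑ φ, volume.real (orderedCube n ∩ gridCell k φ) * κ φ := by
  have hmeas : ∀ φ, MeasurableSet (orderedCube n ∩ gridCell k φ) := fun φ =>
    (measurableSet_orderedCube n).inter (measurableSet_gridCell φ)
  have hint : ∀ φ, IntegrableOn f (orderedCube n ∩ gridCell k φ) := fun φ =>
    (integrableOn_const <| (measure_mono inter_subset_right).trans_lt
      (by simp [volume_gridCell]) |>.ne).congr_fun (hf φ).symm (hmeas φ)
  rw [setIntegral_congr_set (orderedCube_ae_eq_iUnion_inter_gridCell hk),
    integral_iUnion hmeas (fun φ ψ hne => ((pairwise_disjoint_gridCell n k hne).mono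
      inter_subset_right inter_subset_right)) (integrableOn_finite_iUnion.mpr hint), tsum_fintype]
  refine Finset.sum_congr rfl fun φ _ => ?_
  rw [setIntegral_congr_fun (hmeas φ) (hf φ), setIntegral_const, smul_eq_mul]

lemma sig_pwl_eq_sum {d n : ℕ} (hn : 0 < n) (x : Fin (n + 1) → Fin d → ℝ) (w : List (Fin d)) :
    sig (pwl x) w = ∑ φ : Fin w.length → Fin n, volume.real (orderedCube w.length ∩ gridCell n φ) *
      ∏ i, n * (x (φ i).succ (w.get i) - x (φ i).castSucc (w.get i)) :=
  setIntegral_orderedCube_eq_sum hn _ fun φ _ ht => Finset.prod_congr rfl fun i _ =>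
    (hasDerivAt_pwl x (w.get i) (φ i) (ht.2 i trivial)).deriv

lemma sig_nil {d : ℕ} (X : ℝ → Fin d → ℝ) : sig X [] = 1 := by
  simp [sig, Subsingleton.monotone, measureReal_def, volume_pi]

lemma Fin.eq_cast_of_monotone_of_surjective {n k : ℕ} (h : n = k) {φ : Fin n → Fin k}
    (hmono : Monotone φ) (hsurj : Function.Surjective φ) : φ = Fin.cast h := by
  subst h
  have hinj := Finite.injective_iff_surjective.mpr hsurj
  have hφ : φ = id := (hmono.strictMono_of_injective hinj).range_inj strictMono_id |>.mp
    (by rw [hsurj.range_eq, range_id])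
  funext i
  simp [hφ]

lemma Finset.sum_neg_one_pow_card_compl_mul_ite_subset {α R : Type*} [Fintype α] [DecidableEq α]
    [CommRing R] (s : Finset α) :
    ∑ A : Finset α, (-1 : R) ^ Aᶜ.card * (if s ⊆ A then 1 else 0) =
      if s = Finset.univ then 1 else 0 := by
  calc ∑ A : Finset α, (-1 : R) ^ Aᶜ.card * (if s ⊆ A then 1 else 0)
      = ∑ B : Finset α, (-1 : R) ^ B.card * (if B ⊆ sᶜ then 1 else 0) :=
        Fintype.sum_bijective _ compl_involutive.bijective _ _ fun A => by
          simp only [Finset.compl_subset_compl]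
    _ = ∑ B ∈ sᶜ.powerset, (-1 : R) ^ B.card := by
        simp only [mul_boole]
        rw [← Finset.sum_filter]
        congr
        ext B
        simp
    _ = if s = Finset.univ then 1 else 0 := by
        have := congrArg (Int.cast : ℤ → R) (Finset.sum_powerset_neg_one_pow_card (x := sᶜ))
        push_cast at this
        simp only [this, Finset.compl_eq_empty_iff]

lemma sum_neg_one_pow_card_compl_mul_prod_ite_mem {ι α R : Type*} [Fintype ι] [Fintype α]
    [DecidableEq α] [CommRing R] (φ : ι → α) :
    ∑ A : Finset α, (-1 : R) ^ Aᶜ.card * ∏ i, (if φ i ∈ A then 1 else 0) =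
      if Function.Surjective φ then 1 else 0 := by
  have hprod : ∀ A : Finset α, (∏ i, if φ i ∈ A then (1 : R) else 0) =
      if Finset.univ.image φ ⊆ A then 1 else 0 := fun A => by
    simp [Fintype.prod_boole, Finset.image_subset_iff]
  have himage : Finset.univ.image φ = Finset.univ ↔ Function.Surjective φ := by
    simp [Finset.eq_univ_iff_forall, Function.Surjective]
  simp only [hprod, Finset.sum_neg_one_pow_card_compl_mul_ite_subset, himage]

def stepPoints {d k : ℕ} (c : Fin k → Fin d) (A : Finset (Fin k)) : Fin (k + 1) → Fin d → ℝ :=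
  Fin.partialSum fun m => if m ∈ A then Pi.single (c m) 1 else 0

lemma stepPoints_succ_sub_castSucc {d k : ℕ} (c : Fin k → Fin d) (A : Finset (Fin k)) (m : Fin k)
    (j : Fin d) : stepPoints c A m.succ j - stepPoints c A m.castSucc j =
      (if c m = j then 1 else 0) * if m ∈ A then 1 else 0 := by
  by_cases hm : m ∈ A <;> simp [stepPoints, Fin.partialSum_succ, hm, Pi.single_apply, eq_comm]

lemma sum_volume_real_mul_prod_mul_ite_surjective {d : ℕ} (U L : List (Fin d))
    (hL : L.length ≤ U.length) :
    ∑ φ : Fin L.length → Fin U.length, volume.real (orderedCube L.length ∩ gridCell U.length φ) *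
        (∏ i, U.length * if U.get (φ i) = L.get i then (1 : ℝ) else 0) *
        (if Function.Surjective φ then 1 else 0) = if L = U then 1 else 0 := by
  rcases hL.lt_or_eq with hlt | heq
  · have hnsurj : ∀ φ : Fin L.length → Fin U.length, ¬ Function.Surjective φ := fun φ hφ =>
      hlt.not_ge (by simpa using Fintype.card_le_of_surjective φ hφ)
    have hne : L ≠ U := fun h => hlt.ne (congrArg List.length h)
    simp [hnsurj, hne]
  rw [Finset.sum_eq_single (Fin.cast heq)]
  · have hLU : (∀ i, U.get (Fin.cast heq i) = L.get i) ↔ L = U := by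
      refine ⟨fun h => List.ext_get heq fun m h₁ _ => (h ⟨m, h₁⟩).symm, ?_⟩
      rintro rfl i
      rfl
    have hsurj : Function.Surjective (Fin.cast heq) := (finCongr heq).surjective
    rw [volume_real_orderedCube_inter_gridCell_cast, Finset.prod_mul_distrib, Finset.prod_const,
      Fintype.prod_boole, if_pos hsurj, mul_one, Finset.card_univ, Fintype.card_fin]
    simp only [hLU, ← heq]
    split_ifs
    · rw [mul_one, ← mul_pow]
      rcases eq_or_ne L.length 0 with h0 | h0
      · simp [h0]
      · rw [one_div_mul_cancel (Nat.cast_ne_zero.mpr h0), one_pow]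
    · simp
  · intro φ _ hφ
    by_cases hsurj : Function.Surjective φ
    · have hempty : orderedCube L.length ∩ gridCell U.length φ = ∅ := by
        by_contra hne
        exact hφ (Fin.eq_cast_of_monotone_of_surjective heq
          (monotone_of_nonempty_orderedCube_inter_gridCell (nonempty_iff_ne_empty.mpr hne)) hsurj)
      simp [hempty]
    · simp [hsurj]
  · simp

lemma sum_neg_one_pow_mul_sig_stepPoints {d : ℕ} (U L : List (Fin d)) (hL : L.length ≤ U.length) :
    ∑ A : Finset (Fin U.length), (-1 : ℝ) ^ Aᶜ.card * sig (pwl (stepPoints U.get A)) L =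
      if L = U then 1 else 0 := by
  rcases Nat.eq_zero_or_pos U.length with hU | hU
  · obtain rfl := List.eq_nil_of_length_eq_zero hU
    obtain rfl := List.eq_nil_of_length_eq_zero (Nat.le_zero.mp hL)
    simp [sig_nil, Finset.eq_empty_of_isEmpty]
  set V := fun φ : Fin L.length → Fin U.length =>
    volume.real (orderedCube L.length ∩ gridCell U.length φ)
  set P := fun φ : Fin L.length → Fin U.length =>
    ∏ i, U.length * if U.get (φ i) = L.get i then (1 : ℝ) else 0
  calc ∑ A : Finset (Fin U.length), (-1 : ℝ) ^ Aᶜ.card * sig (pwl (stepPoints U.get A)) L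
      = ∑ A : Finset (Fin U.length), (-1 : ℝ) ^ Aᶜ.card *
          ∑ φ, V φ * (P φ * ∏ i, if φ i ∈ A then 1 else 0) := by
        refine Finset.sum_congr rfl fun A _ => ?_
        simp only [sig_pwl_eq_sum hU, stepPoints_succ_sub_castSucc, V, P, ← Finset.prod_mul_distrib,
          mul_assoc]
    _ = ∑ φ, V φ * P φ * ∑ A : Finset (Fin U.length), (-1 : ℝ) ^ Aᶜ.card *
          ∏ i, if φ i ∈ A then 1 else 0 := by
        simp only [Finset.mul_sum]
        rw [Finset.sum_comm]
        refine Finset.sum_congr rfl fun φ _ => Finset.sum_congr rfl fun A _ => by ring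
    _ = if L = U then 1 else 0 := by
        simp only [sum_neg_one_pow_card_compl_mul_prod_ite_mem, V, P]
        exact sum_volume_real_mul_prod_mul_ite_surjective U L hL

lemma sigPair_sub {d : ℕ} (X : ℝ → Fin d → ℝ) (p q : FreeTensor d) :
    sigPair X (p - q) = sigPair X p - sigPair X q := by
  rw [sigPair, sigPair, sigPair, MonoidAlgebra.coeff_sub]
  exact Finsupp.sum_sub_index fun _ _ _ => sub_mul _ _ _

lemma sum_neg_one_pow_mul_sigPair_stepPoints {d : ℕ} (p : FreeTensor d)
    (u : FreeMonoid (Fin d)) (hu : ∀ m ∈ p.coeff.support, m.toList.length ≤ u.toList.length) :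
    ∑ A : Finset (Fin u.toList.length),
      (-1 : ℝ) ^ Aᶜ.card * sigPair (pwl (stepPoints u.toList.get A)) p = p.coeff u := by
  classical
  calc ∑ A : Finset (Fin u.toList.length),
        (-1 : ℝ) ^ Aᶜ.card * sigPair (pwl (stepPoints u.toList.get A)) p
      = ∑ m ∈ p.coeff.support, p.coeff m * ∑ A : Finset (Fin u.toList.length),
          (-1 : ℝ) ^ Aᶜ.card * sig (pwl (stepPoints u.toList.get A)) m.toList := by
        simp only [sigPair, Finsupp.sum, Finset.mul_sum]
        rw [Finset.sum_comm]
        exact Finset.sum_congr rfl fun m _ => Finset.sum_congr rfl fun A _ => by ring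
    _ = p.coeff.sum fun m c => if m = u then c else 0 :=
        Finset.sum_congr rfl fun m hm => by
          simp only [sum_neg_one_pow_mul_sig_stepPoints _ _ (hu m hm),
            FreeMonoid.toList.apply_eq_iff_eq, mul_boole]
    _ = p.coeff u := Finsupp.sum_ite_self_eq' _ _

lemma eq_zero_of_forall_sigPair_pwl_eq_zero {d : ℕ} (p : FreeTensor d)
    (h : ∀ (n : ℕ) (x : Fin (n + 1) → Fin d → ℝ), sigPair (pwl x) p = 0) : p = 0 := by
  by_contra hp
  obtain ⟨u, hu, hmax⟩ := p.coeff.support.exists_max_image (fun m => m.toList.length)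
    (Finsupp.support_nonempty_iff.mpr (mt MonoidAlgebra.coeff_eq_zero.mp hp))
  refine Finsupp.mem_support_iff.mp hu ?_
  simp [← sum_neg_one_pow_mul_sigPair_stepPoints p u hmax, h]

theorem weak_chen_chow {d : ℕ} (w v : FreeTensor d)
    (h : ∀ (n : ℕ) (x : Fin (n + 1) → Fin d → ℝ), sigPair (pwl x) w = sigPair (pwl x) v) :
    w = v :=
  sub_eq_zero.mp <| eq_zero_of_forall_sigPair_pwl_eq_zero _ fun n x => by
    rw [sigPair_sub, h, sub_self]
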